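/- Let $G$ be a group acting on a set $M$. Define $\Lambda = \{(g,m) \in G \times M : g \cdot m = m\}$, and let $G$ act on $\Lambda$ by $h \cdot (g,m) = (h g h^{-1},\ h\cdot m)$. Then: (1) the map $\Lambda \to \mathrm{ConjClasses}(G)$ sending $(g,m)$ to the conjugacy class of $g$ is constant on $G$-orbits, hence descends to a map $\pi : \Lambda/G \to \mathrm{ConjClasses}(G)$; and (2) for every $g \in G$, the fiber $\pi^{-1}((g))$ over the conjugacy class of $g$ is in bijection with the orbit space $M^g / C(g)$, where $M^g = \{m : g\cdot m = m\}$ and $C(g)$ is the centralizer of $g$ in $G$; the bijection sends the $C(g)$-orbit of $m \in M^g$ to the $G$-orbit of $(g,m)$. -/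
import Mathlib


/-- The fixed-point set of `g` acting on `M`. -/
def FixedPts {G M : Type*} [Group G] [MulAction G M] (g : G) : Type _ :=
  {m : M // g • m = m}

/-- The setoid on the fixed-point set `Mᵍ` whose equivalence classes are the orbits of
the action of the centralizer `C(g) = {h : h * g = g * h}` on `Mᵍ`. -/
def centralizerOrbitSetoid {G M : Type*} [Group G] [MulAction G M] (g : G) :
    Setoid (FixedPts (G := G) (M := M) g) where
  r a b := ∃ h : G, h * g = g * h ∧ h • a.val = b.val
  iseqv := by
    constructor
    · intro a
      exact ⟨1, by rw [one_mul, mul_one], one_smul _ _⟩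
    · rintro a b ⟨h, hc, hs⟩
      refine ⟨h⁻¹, Commute.inv_left hc, ?_⟩
      rw [← hs, inv_smul_smul]
    · rintro a b c ⟨h₁, hc₁, hs₁⟩ ⟨h₂, hc₂, hs₂⟩
      refine ⟨h₂ * h₁, ?_, ?_⟩
      · rw [mul_assoc, hc₁, ← mul_assoc, hc₂, mul_assoc]
      · rw [mul_smul, hs₁, hs₂]

/-- The set `Λ = {(g,m) : g • m = m}` underlying the inertia groupoid of `[M/G]`. -/
def Inertia (G M : Type*) [Group G] [MulAction G M] : Type _ :=
  {p : G × M // p.1 • p.2 = p.2}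

/-- The setoid on `Λ` whose classes are the orbits of the `G`-action
`h • (g, m) = (h g h⁻¹, h • m)`. -/
def inertiaSetoid (G M : Type*) [Group G] [MulAction G M] :
    Setoid (Inertia G M) where
  r a b := ∃ h : G, h * a.val.1 * h⁻¹ = b.val.1 ∧ h • a.val.2 = b.val.2
  iseqv := by
    constructor
    · intro a
      exact ⟨1, by rw [one_mul, inv_one, mul_one], one_smul _ _⟩
    · rintro a b ⟨h, hc, hs⟩
      refine ⟨h⁻¹, ?_, ?_⟩
      · rw [← hc]; group
      · rw [← hs, inv_smul_smul]
    · rintro a b c ⟨h₁, hc₁, hs₁⟩ ⟨h₂, hc₂, hs₂⟩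
      refine ⟨h₂ * h₁, ?_, ?_⟩
      · rw [← hc₂, ← hc₁]; group
      · rw [mul_smul, hs₁, hs₂]

/-- The inertia groupoid of a global quotient decomposes over conjugacy classes:
the map `(g, m) ↦ (g)` is constant on `G`-orbits of `Λ = {(g,m) : g • m = m}`, hence
descends to `π : Λ/G → ConjClasses G`, and the fiber of `π` over the conjugacy class
of `g` is in bijection with the orbit space `Mᵍ/C(g)`, by sending the `C(g)`-orbit of
`m ∈ Mᵍ` to the `G`-orbit of `(g, m)`.  (This is `I(X) = ∐_{(g)} [Mᵍ/C(g)]` for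
`X = [M/G]`.) -/
theorem inertia_decomposition (G M : Type*) [Group G] [MulAction G M] :
    (∀ (h : G) (p : Inertia G M),
        ConjClasses.mk (h * p.val.1 * h⁻¹) = ConjClasses.mk p.val.1) ∧
    ∃ π : Quotient (inertiaSetoid G M) → ConjClasses G,
      (∀ p : Inertia G M,
          π (Quotient.mk (inertiaSetoid G M) p) = ConjClasses.mk p.val.1) ∧
      ∀ g : G,
        ∃ e : Quotient (centralizerOrbitSetoid (M := M) g)
            ≃ {x : Quotient (inertiaSetoid G M) // π x = ConjClasses.mk g},
          ∀ (m : M) (hm : g • m = m),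
            (e (Quotient.mk (centralizerOrbitSetoid (M := M) g) ⟨m, hm⟩)).val
              = Quotient.mk (inertiaSetoid G M) ⟨(g, m), hm⟩ := by
  have key : ∀ (h : G) (p : Inertia G M),
      ConjClasses.mk (h * p.val.1 * h⁻¹) = ConjClasses.mk p.val.1 := by
    intro h p
    exact ConjClasses.mk_eq_mk_iff_isConj.mpr (isConj_iff.mpr ⟨h, rfl⟩).symm
  have hlift : ∀ a b : Inertia G M, (inertiaSetoid G M).r a b →
      ConjClasses.mk a.val.1 = ConjClasses.mk b.val.1 := by
    rintro a b ⟨h, hc, -⟩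
    rw [← hc]; exact (key h a).symm
  refine ⟨key, Quotient.lift (fun p : Inertia G M => ConjClasses.mk p.val.1) hlift,
    fun p => rfl, ?_⟩
  intro g
  have Fwd : ∀ a b : FixedPts (G := G) (M := M) g,
      (centralizerOrbitSetoid (M := M) g).r a b →
      (Quotient.mk (inertiaSetoid G M) ⟨(g, a.val), a.property⟩ : Quotient _)
        = Quotient.mk (inertiaSetoid G M) ⟨(g, b.val), b.property⟩ := by
    rintro a b ⟨h, hc, hs⟩
    refine Quotient.sound ⟨h, ?_, hs⟩
    show h * g * h⁻¹ = g
    rw [hc, mul_inv_cancel_right]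
  let F : Quotient (centralizerOrbitSetoid (M := M) g) →
      {x : Quotient (inertiaSetoid G M) //
        Quotient.lift (fun p : Inertia G M => ConjClasses.mk p.val.1) hlift x
          = ConjClasses.mk g} :=
    fun q => Quotient.lift (fun m : FixedPts (G := G) (M := M) g =>
      (⟨Quotient.mk (inertiaSetoid G M) ⟨(g, m.val), m.property⟩, rfl⟩ :
        {x // Quotient.lift (fun p : Inertia G M => ConjClasses.mk p.val.1) hlift x
          = ConjClasses.mk g}))
      (fun a b hab => Subtype.ext (Fwd a b hab)) q
  have hF : Function.Bijective F := by
    constructor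
    · refine fun q₁ q₂ => Quotient.inductionOn₂ q₁ q₂ fun a b hab => ?_
      have hab' : (Quotient.mk (inertiaSetoid G M) ⟨(g, a.val), a.property⟩ : Quotient _)
          = Quotient.mk (inertiaSetoid G M) ⟨(g, b.val), b.property⟩ :=
        congrArg Subtype.val hab
      obtain ⟨h, hc, hs⟩ := Quotient.exact hab'
      refine Quotient.sound ⟨h, ?_, hs⟩
      have hc' : h * g * h⁻¹ = g := hc
      have : h * g * h⁻¹ * h = g * h := by rw [hc']
      rwa [inv_mul_cancel_right] at this
    · rintro ⟨x, hx⟩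
      obtain ⟨p, rfl⟩ := Quotient.exists_rep x
      have hconj : IsConj p.val.1 g := ConjClasses.mk_eq_mk_iff_isConj.mp hx
      obtain ⟨c, hc⟩ := isConj_iff.mp hconj
      have hfix : g • (c • p.val.2) = c • p.val.2 := by
        rw [← hc, mul_assoc, mul_smul, mul_smul, inv_smul_smul, p.property]
      refine ⟨Quotient.mk _ ⟨c • p.val.2, hfix⟩, Subtype.ext ?_⟩
      show (Quotient.mk (inertiaSetoid G M) ⟨(g, c • p.val.2), hfix⟩ : Quotient _)
        = Quotient.mk (inertiaSetoid G M) p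
      exact (Quotient.sound ⟨c, hc, rfl⟩ : Quotient.mk (inertiaSetoid G M) p = _).symm
  exact ⟨Equiv.ofBijective F hF, fun m hm => rfl⟩
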